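/- arXiv:2107.09745 — 2 statements merged into one kernel-verified Lean document; each statement's English description precedes it below -/
import Mathlib

section
/- Let n ≥ 1 and let x be a schedule. Then the complement of H(x) is nonempty (in particular, the first job on any nonempty machine sequence is not in H(x)), and the worst-case regret is attained on extreme scenarios of jobs outside H(x): Z(x) = max over j ∉ H(x) of Q(x, r̄^j). -/
open Finset

/-- A schedule assigns to each machine a finite sequence of jobs such that
every job occurs exactly once among all the sequences. -/
structure Schedule (m n : ℕ) where
  seq : Fin m → List (Fin n)
  valid : ∀ j : Fin n, (∑ i : Fin m, (seq i).count j) = 1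

variable {m n : ℕ}

/-- Completion time after processing the list `L` of jobs on a machine with
processing times `q` and release dates `r`; recursively `C₀ = 0`,
`C_k = q j_k + max C_{k-1} (r j_k)`. -/
def mComp (q r : Fin n → ℝ) (L : List (Fin n)) : ℝ :=
  L.foldl (fun c j => q j + max c (r j)) 0

/-- Makespan of the schedule `x` under the release dates `r`. -/
noncomputable def Cmax (p : Fin m → Fin n → ℝ) (x : Schedule m n) (r : Fin n → ℝ) : ℝ :=
  ⨆ i : Fin m, mComp (p i) r (x.seq i)

/-- Optimal makespan `C*(r)`: the minimum of `Cmax` over all schedules. -/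
noncomputable def Cstar (p : Fin m → Fin n → ℝ) (r : Fin n → ℝ) : ℝ :=
  ⨅ x : Schedule m n, Cmax p x r

/-- Regret of schedule `x` under scenario `r`. -/
noncomputable def regret (p : Fin m → Fin n → ℝ) (x : Schedule m n) (r : Fin n → ℝ) : ℝ :=
  Cmax p x r - Cstar p r

/-- The scenario box determined by the interval bounds. -/
def box (rlo rhi : Fin n → ℝ) : Set (Fin n → ℝ) :=
  {r | ∀ j, rlo j ≤ r j ∧ r j ≤ rhi j}

/-- Worst-case regret `Z(x)`. -/
noncomputable def Zreg (p : Fin m → Fin n → ℝ) (x : Schedule m n) (rlo rhi : Fin n → ℝ) : ℝ :=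
  sSup ((fun r => regret p x r) '' box rlo rhi)

/-- Extreme scenario `r̄^j`. -/
def extSc (rlo rhi : Fin n → ℝ) (j : Fin n) : Fin n → ℝ :=
  Function.update rlo j (rhi j)

/-- The set `H(x)` of jobs whose release interval is covered by the
processing of their predecessors (positions are 0-indexed: job at position
`k ≥ 1` has predecessors `(x.seq i).take k`). -/
def Hset (p : Fin m → Fin n → ℝ) (rlo rhi : Fin n → ℝ) (x : Schedule m n) : Set (Fin n) :=
  {j | ∃ i : Fin m, ∃ k : ℕ, 1 ≤ k ∧ (x.seq i)[k]? = some j ∧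
    rhi j ≤ mComp (p i) rlo ((x.seq i).take k)}

/-- Lower bound `LB₁(r) = max_j (r j + min_i p i j)`. -/
noncomputable def LB1 (p : Fin m → Fin n → ℝ) (r : Fin n → ℝ) : ℝ :=
  ⨆ j : Fin n, (r j + ⨅ i : Fin m, p i j)

/-- Lower bound `LB(r) = min_j r j + m⁻¹ ∑_j min_i p i j`. -/
noncomputable def LB0 (p : Fin m → Fin n → ℝ) (r : Fin n → ℝ) : ℝ :=
  (⨅ j : Fin n, r j) + (m : ℝ)⁻¹ * ∑ j : Fin n, ⨅ i : Fin m, p i j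

/-- `E_j(r)`: the jobs unavailable before `j`. -/
noncomputable def Ej (r : Fin n → ℝ) (j : Fin n) : Finset (Fin n) :=
  Finset.univ.filter fun t => r j ≤ r t

lemma Ej_nonempty (r : Fin n → ℝ) (j : Fin n) : (Ej r j).Nonempty :=
  ⟨j, by simp [Ej]⟩

/-- `W_j(E_j(r), p)` from the paper. -/
noncomputable def W2 (p : Fin m → Fin n → ℝ) (r : Fin n → ℝ) (j : Fin n) : ℝ :=
  (Ej r j).inf' (Ej_nonempty r j) r + (m : ℝ)⁻¹ * ∑ t ∈ Ej r j, ⨅ i : Fin m, p i t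

/-- Lower bound `LB₂(r)`. -/
noncomputable def LB2 (p : Fin m → Fin n → ℝ) (r : Fin n → ℝ) : ℝ :=
  ⨆ j : Fin n, W2 p r j

/-- `W̃_j(E_j(r), p_w)` from the paper, with `λ_j = ⌈|E_j(r)|/m⌉`. -/
noncomputable def W3 (p : Fin m → Fin n → ℝ) (r : Fin n → ℝ) (j : Fin n) : ℝ :=
  (Ej r j).inf' (Ej_nonempty r j) r +
    (⌈((Ej r j).card : ℝ) / (m : ℝ)⌉ : ℝ) *
      (Ej r j).inf' (Ej_nonempty r j) (fun t => ⨅ i : Fin m, p i t)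

/-- Lower bound `LB₃(r)`. -/
noncomputable def LB3 (p : Fin m → Fin n → ℝ) (r : Fin n → ℝ) : ℝ :=
  ⨆ j : Fin n, W3 p r j

/-- The combined lower bound `LB(r̄) = max {LB₁, LB₂, LB₃}`. -/
noncomputable def LBall (p : Fin m → Fin n → ℝ) (r : Fin n → ℝ) : ℝ :=
  max (LB1 p r) (max (LB2 p r) (LB3 p r))


/-! The regret `Q(x, r)` is bounded by `Q(x, r̄^j)` for the job `j` that starts the last block of
uninterrupted processing on a machine attaining the makespan: moving `r j` up to `r⁺ j` delays the
makespan of `x` by exactly `r⁺ j - r j`, while no release date grows by more than that, so `C*`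
grows by at most `r⁺ j - r j`. That job is either first on its machine or starts after an idle
period, i.e. `C_{i,k-1}(x, r⁻) ≤ C_{i,k-1}(x, r) < r j ≤ r⁺ j`; either way it lies outside `H(x)`. -/

section CompletionTime

variable {q r r' : Fin n → ℝ}

lemma mComp_append_singleton (L : List (Fin n)) (a : Fin n) :
    mComp q r (L ++ [a]) = q a + max (mComp q r L) (r a) :=
  List.foldl_concat _ _ _ _

lemma mComp_mono (hr : ∀ t, r t ≤ r' t) (L : List (Fin n)) : mComp q r L ≤ mComp q r' L := by
  induction L using List.reverseRecOn with
  | nil => exact le_rfl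
  | append_singleton L a ih =>
    rw [mComp_append_singleton, mComp_append_singleton]
    gcongr
    exact hr a

lemma mComp_le_add {δ : ℝ} (hδ : 0 ≤ δ) (hr : ∀ t, r' t ≤ r t + δ) (L : List (Fin n)) :
    mComp q r' L ≤ mComp q r L + δ := by
  induction L using List.reverseRecOn with
  | nil => simpa [mComp] using hδ
  | append_singleton L a ih =>
    rw [mComp_append_singleton, mComp_append_singleton]
    have := max_le_max ih (hr a)
    rw [max_add_add_right] at this
    linarith

lemma mComp_pos (hq : ∀ t, 0 < q t) (hr : ∀ t, 0 ≤ r t) {L : List (Fin n)} (hL : L ≠ []) :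
    0 < mComp q r L := by
  induction L using List.reverseRecOn with
  | nil => exact absurd rfl hL
  | append_singleton L a _ =>
    rw [mComp_append_singleton]
    linarith [hq a, hr a, le_max_right (mComp q r L) (r a)]

lemma mComp_add_sum_le_mComp_append (L₁ L₂ : List (Fin n)) :
    mComp q r L₁ + (L₂.map q).sum ≤ mComp q r (L₁ ++ L₂) := by
  induction L₂ using List.reverseRecOn with
  | nil => simp
  | append_singleton L a ih =>
    rw [← List.append_assoc, mComp_append_singleton, List.map_append, List.sum_append,
      List.map_singleton, List.sum_singleton]
    linarith [le_max_left (mComp q r (L₁ ++ L)) (r a)]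

lemma add_sum_drop_le_mComp {L : List (Fin n)} {k : ℕ} {j : Fin n} (hj : L[k]? = some j) :
    r j + ((L.drop k).map q).sum ≤ mComp q r L := by
  obtain ⟨hk, rfl⟩ := List.getElem?_eq_some_iff.mp hj
  calc r L[k] + ((L.drop k).map q).sum
      ≤ mComp q r (L.take k ++ [L[k]]) + ((L.drop (k + 1)).map q).sum := by
        rw [List.drop_eq_getElem_cons hk, mComp_append_singleton]
        simp only [List.map_cons, List.sum_cons]
        linarith [le_max_right (mComp q r (L.take k)) (r L[k])]
    _ ≤ mComp q r L := by
        convert mComp_add_sum_le_mComp_append (q := q) (r := r) _ _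
        simp

/-- The job `j` at position `k` starts the last block of uninterrupted processing of `L`. -/
lemma exists_critical_position (hr : ∀ t, 0 ≤ r t) {L : List (Fin n)} (hL : L ≠ []) :
    ∃ k j, L[k]? = some j ∧ mComp q r L ≤ r j + ((L.drop k).map q).sum ∧
      (k = 0 ∨ mComp q r (L.take k) < r j) := by
  induction L using List.reverseRecOn with
  | nil => exact absurd rfl hL
  | append_singleton L a ih =>
    rw [mComp_append_singleton]
    by_cases hbusy : L ≠ [] ∧ r a ≤ mComp q r L
    · obtain ⟨k, j, hj, hle, hidle⟩ := ih hbusy.1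
      have hk : k < L.length := (List.getElem?_eq_some_iff.mp hj).1
      refine ⟨k, j, by rwa [List.getElem?_append_left hk], ?_, ?_⟩
      · rw [max_eq_left hbusy.2, List.drop_append_of_le_length hk.le]
        simp only [List.map_append, List.sum_append, List.map_singleton, List.sum_singleton]
        linarith
      · rwa [List.take_append_of_le_length hk.le]
    · have hidle : L = [] ∨ mComp q r L < r a := by
        by_cases hL : L = []
        · exact .inl hL
        · exact .inr (lt_of_not_ge fun h => hbusy ⟨hL, h⟩)
      refine ⟨L.length, a, List.getElem?_concat_length .., ?_, ?_⟩
      · have hmax : mComp q r L ≤ r a := by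
          rcases hidle with rfl | h
          exacts [hr a, h.le]
        simp [max_eq_right hmax, add_comm]
      · rcases hidle with rfl | h
        · exact .inl rfl
        · exact .inr (by rwa [List.take_left])

end CompletionTime

namespace Schedule

variable (x : Schedule m n)

lemma count_le_one (i : Fin m) (j : Fin n) : (x.seq i).count j ≤ 1 :=
  x.valid j ▸ Finset.single_le_sum (f := fun i => (x.seq i).count j)
    (fun _ _ => Nat.zero_le _) (mem_univ i)

lemma nodup (i : Fin m) : (x.seq i).Nodup :=
  List.nodup_iff_count_le_one.mpr (x.count_le_one i)

lemma exists_mem (j : Fin n) : ∃ i, j ∈ x.seq i := by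
  by_contra! h
  have := x.valid j
  rw [Finset.sum_eq_zero fun i _ => List.count_eq_zero.mpr (h i)] at this
  exact zero_ne_one this

lemma eq_of_mem_of_mem {i i' : Fin m} {j : Fin n} (h : j ∈ x.seq i) (h' : j ∈ x.seq i') :
    i = i' := by
  by_contra hii
  have := Finset.sum_le_sum_of_subset (f := fun t => (x.seq t).count j) (subset_univ {i, i'})
  rw [sum_pair hii, x.valid j] at this
  have := List.count_pos_iff.mpr h
  have := List.count_pos_iff.mpr h'
  omega

lemma eq_of_getElem?_eq_some {i i' : Fin m} {k k' : ℕ} {j : Fin n}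
    (h : (x.seq i)[k]? = some j) (h' : (x.seq i')[k']? = some j) : i = i' ∧ k = k' := by
  obtain rfl := x.eq_of_mem_of_mem (List.mem_of_getElem? h) (List.mem_of_getElem? h')
  exact ⟨rfl, (List.getElem?_inj (List.getElem?_eq_some_iff.mp h).1 (x.nodup i)).mp (h.trans h'.symm)⟩

instance : Finite (Schedule m n) :=
  Finite.of_injective (fun x i => (⟨x.seq i, x.nodup i⟩ : {L : List (Fin n) // L.Nodup})) <| by
    rintro ⟨s, _⟩ ⟨s', _⟩ h
    congr
    funext i
    exact congrArg Subtype.val (congrFun h i)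

variable (p : Fin m → Fin n → ℝ) (rlo rhi : Fin n → ℝ)

lemma head_not_mem_Hset (i : Fin m) (h : x.seq i ≠ []) : (x.seq i).head h ∉ Hset p rlo rhi x := by
  rintro ⟨i', k, hk, hj, -⟩
  have h0 : (x.seq i)[0]? = some ((x.seq i).head h) := by
    rw [← List.head?_eq_some_head h, List.head?_eq_getElem?]
  have := (x.eq_of_getElem?_eq_some h0 hj).2
  omega

lemma Hset_compl_nonempty [Nonempty (Fin n)] : (Hset p rlo rhi x)ᶜ.Nonempty := by
  obtain ⟨i, hi⟩ := x.exists_mem (Classical.arbitrary _)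
  exact ⟨_, x.head_not_mem_Hset p rlo rhi i (List.ne_nil_of_mem hi)⟩

end Schedule

section Makespan

variable (p : Fin m → Fin n → ℝ) {r r' : Fin n → ℝ}

lemma mComp_le_Cmax (x : Schedule m n) (r : Fin n → ℝ) (i : Fin m) :
    mComp (p i) r (x.seq i) ≤ Cmax p x r :=
  le_ciSup (f := fun i' => mComp (p i') r (x.seq i')) (Set.finite_range _).bddAbove i

lemma Cmax_mono (x : Schedule m n) (hr : ∀ t, r t ≤ r' t) : Cmax p x r ≤ Cmax p x r' :=
  ciSup_mono (Set.finite_range _).bddAbove fun _ => mComp_mono hr _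

lemma Cmax_le_add [Nonempty (Fin m)] (x : Schedule m n) {δ : ℝ} (hδ : 0 ≤ δ)
    (hr : ∀ t, r' t ≤ r t + δ) : Cmax p x r' ≤ Cmax p x r + δ :=
  ciSup_le fun i => (mComp_le_add hδ hr _).trans (add_le_add_left (mComp_le_Cmax p x r i) δ)

lemma Cstar_le_Cmax (x : Schedule m n) (r : Fin n → ℝ) : Cstar p r ≤ Cmax p x r :=
  ciInf_le (Set.finite_range _).bddBelow x

lemma Cstar_mono (hr : ∀ t, r t ≤ r' t) : Cstar p r ≤ Cstar p r' :=
  ciInf_mono (Set.finite_range _).bddBelow fun x => Cmax_mono p x hr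

lemma Cstar_le_add [Nonempty (Fin m)] [Nonempty (Schedule m n)] {δ : ℝ} (hδ : 0 ≤ δ)
    (hr : ∀ t, r' t ≤ r t + δ) : Cstar p r' ≤ Cstar p r + δ :=
  sub_le_iff_le_add.mp <| le_ciInf fun x =>
    sub_le_iff_le_add.mpr ((Cstar_le_Cmax p x r').trans (Cmax_le_add p x hδ hr))

end Makespan

section Regret

variable (p : Fin m → Fin n → ℝ) {rlo rhi : Fin n → ℝ} (x : Schedule m n)

lemma extSc_mem_box (hle : ∀ j, rlo j ≤ rhi j) (j : Fin n) : extSc rlo rhi j ∈ box rlo rhi := by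
  intro t
  rcases eq_or_ne t j with rfl | ht
  · simp [extSc, hle t]
  · simp [extSc, Function.update_of_ne ht, hle t]

lemma bddAbove_regret_image_box : BddAbove ((fun r => regret p x r) '' box rlo rhi) := by
  refine ⟨Cmax p x rhi - Cstar p rlo, ?_⟩
  rintro _ ⟨r, hr, rfl⟩
  exact sub_le_sub (Cmax_mono p x fun t => (hr t).2) (Cstar_mono p fun t => (hr t).1)

lemma regret_le_regret_extSc [Nonempty (Fin m)] {r : Fin n → ℝ} (hr : r ∈ box rlo rhi)
    {i : Fin m} {k : ℕ} {j : Fin n} (hj : (x.seq i)[k]? = some j)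
    (hcrit : Cmax p x r ≤ r j + (((x.seq i).drop k).map (p i)).sum) :
    regret p x r ≤ regret p x (extSc rlo rhi j) := by
  have : Nonempty (Schedule m n) := ⟨x⟩
  have hδ : 0 ≤ rhi j - r j := sub_nonneg.mpr (hr j).2
  have hshift : ∀ t, extSc rlo rhi j t ≤ r t + (rhi j - r j) := by
    intro t
    rcases eq_or_ne t j with rfl | ht
    · simp [extSc]
    · simp only [extSc, Function.update_of_ne ht]
      linarith [(hr t).1]
  have hCmax : Cmax p x r + (rhi j - r j) ≤ Cmax p x (extSc rlo rhi j) := by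
    have := add_sum_drop_le_mComp (q := p i) (r := extSc rlo rhi j) hj
    rw [show extSc rlo rhi j j = rhi j from Function.update_self ..] at this
    linarith [mComp_le_Cmax p x (extSc rlo rhi j) i]
  have hCstar := Cstar_le_add p hδ hshift
  unfold regret
  linarith

lemma exists_not_mem_Hset_regret_le [Nonempty (Fin m)] [Nonempty (Fin n)]
    (hp : ∀ i j, 0 < p i j) (hlo : ∀ j, 0 ≤ rlo j) {r : Fin n → ℝ} (hr : r ∈ box rlo rhi) :
    ∃ j ∉ Hset p rlo rhi x, regret p x r ≤ regret p x (extSc rlo rhi j) := by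
  have hr0 : ∀ t, 0 ≤ r t := fun t => (hlo t).trans (hr t).1
  obtain ⟨i, hi⟩ := Finite.exists_max fun i => mComp (p i) r (x.seq i)
  have hne : x.seq i ≠ [] := by
    intro hnil
    obtain ⟨i', hi'⟩ := x.exists_mem (Classical.arbitrary _)
    have := mComp_pos (hp i') hr0 (List.ne_nil_of_mem hi')
    linarith [hi i', show mComp (p i) r (x.seq i) = 0 by rw [hnil]; rfl]
  obtain ⟨k, j, hj, hcrit, hidle⟩ := exists_critical_position (q := p i) hr0 hne
  refine ⟨j, ?_, regret_le_regret_extSc p x hr hj ((ciSup_le hi).trans hcrit)⟩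
  rintro ⟨i', k', hk', hj', hcover⟩
  obtain ⟨rfl, rfl⟩ := x.eq_of_getElem?_eq_some hj hj'
  rcases hidle with rfl | hidle
  · omega
  · linarith [mComp_mono (q := p i) (fun t => (hr t).1) ((x.seq i).take k), (hr j).2]

end Regret

theorem worst_case_regret_outside_Hset_general {m n : ℕ} (hn : 1 ≤ n)
    (p : Fin m → Fin n → ℝ) (hp : ∀ i j, 0 < p i j)
    (rlo rhi : Fin n → ℝ) (hlo : ∀ j, 0 ≤ rlo j) (hlt : ∀ j, rlo j < rhi j)
    (x : Schedule m n) :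
    (∀ i : Fin m, ∀ h : x.seq i ≠ [],
        (x.seq i).head h ∉ Hset p rlo rhi x) ∧
      ((Hset p rlo rhi x)ᶜ).Nonempty ∧
      Zreg p x rlo rhi =
        ⨆ j : ((Hset p rlo rhi x)ᶜ : Set (Fin n)),
          regret p x (extSc rlo rhi (j : Fin n)) := by
  have : Nonempty (Fin n) := ⟨⟨0, hn⟩⟩
  have : Nonempty (Fin m) := ⟨(x.exists_mem ⟨0, hn⟩).choose⟩
  have hle : ∀ j, rlo j ≤ rhi j := fun j => (hlt j).le
  have hcompl := x.Hset_compl_nonempty p rlo rhi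
  have : Nonempty ((Hset p rlo rhi x)ᶜ : Set (Fin n)) := hcompl.to_subtype
  refine ⟨x.head_not_mem_Hset p rlo rhi, hcompl, le_antisymm ?_ ?_⟩
  · refine csSup_le ((Set.nonempty_of_mem (extSc_mem_box hle ⟨0, hn⟩)).image _) ?_
    rintro _ ⟨r, hr, rfl⟩
    obtain ⟨j, hj, hreg⟩ := exists_not_mem_Hset_regret_le p x hp hlo hr
    exact hreg.trans <| le_ciSup (f := fun j : ((Hset p rlo rhi x)ᶜ : Set (Fin n)) =>
      regret p x (extSc rlo rhi j)) (Set.finite_range _).bddAbove ⟨j, hj⟩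
  · exact ciSup_le fun j =>
      le_csSup (bddAbove_regret_image_box p x) ⟨_, extSc_mem_box hle j, rfl⟩

/-- the complement of `H(x)` is nonempty (in particular the
first job of any nonempty machine sequence is not in `H(x)`), and the
worst-case regret is attained on extreme scenarios of jobs outside `H(x)`. -/
theorem worst_case_regret_outside_Hset {m n : ℕ} (hm : 0 < m) (hn : 1 ≤ n)
    (p : Fin m → Fin n → ℝ) (hp : ∀ i j, 0 < p i j)
    (rlo rhi : Fin n → ℝ) (hlo : ∀ j, 0 ≤ rlo j) (hlt : ∀ j, rlo j < rhi j)
    (x : Schedule m n) :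
    (∀ i : Fin m, ∀ h : x.seq i ≠ [],
        (x.seq i).head h ∉ Hset p rlo rhi x) ∧
      ((Hset p rlo rhi x)ᶜ).Nonempty ∧
      Zreg p x rlo rhi =
        ⨆ j : ((Hset p rlo rhi x)ᶜ : Set (Fin n)),
          regret p x (extSc rlo rhi (j : Fin n)) :=
  worst_case_regret_outside_Hset_general hn p hp rlo rhi hlo hlt x
end

section
/- (Lower bound LB₂.) Let x be a schedule and let r : Fin n → ℝ with r j ≥ 0 for all j, n ≥ 1. For every job j let E_j(r) = { t : r t ≥ r j } be the set of jobs unavailable before j. Then for every job j, C_max(x,r) ≥ min over t ∈ E_j(r) of r t + (1/m) · ∑ over t ∈ E_j(r) of ( min over machines i of p i t ). In particular C*(r) ≥ LB₂(r) where LB₂(r) is the maximum of this quantity over all jobs j. -/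
open Finset

variable {m n : ℕ}

/-
Fix a job `j` and let `E = E_j(r)`. A machine that processes some job of `E` cannot start the
first of them before `r j`, and from then on it processes, among others, all its jobs of `E`;
so it finishes no earlier than `r j` plus its share `∑ min_i p i t` over its jobs `t ∈ E`. A machine
without jobs of `E` has share `0`, and `r j ≤ C_max` because the machine holding `j` finishes after
`r j`. The shares partition `∑_{t ∈ E} min_i p i t`, so summing over the `m` machines gives
`m · r j + ∑_{t ∈ E} min_i p i t ≤ m · C_max`; finally `min_{t ∈ E} r t ≤ r j`.
-/

section Foldl

variable {α : Type*} (q r : α → ℝ)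

theorem add_sum_le_foldl_completion (L : List α) (c : ℝ) :
    c + (L.map q).sum ≤ L.foldl (fun c s => q s + max c (r s)) c := by
  induction L generalizing c with
  | nil => simp
  | cons s L ih =>
    rw [List.map_cons, List.sum_cons, List.foldl_cons]
    have := ih (q s + max c (r s))
    have := le_max_left c (r s)
    linarith

variable {q}

theorem le_foldl_completion (hq : ∀ s, 0 ≤ q s) (L : List α) (c : ℝ) :
    c ≤ L.foldl (fun c s => q s + max c (r s)) c := by
  have := add_sum_le_foldl_completion q r L c
  have : 0 ≤ (L.map q).sum := List.sum_nonneg (by simpa using fun t _ => hq t)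
  linarith

theorem le_foldl_completion_of_mem (hq : ∀ s, 0 ≤ q s) {L : List α} {s : α} (hs : s ∈ L)
    (c : ℝ) : r s ≤ L.foldl (fun c s => q s + max c (r s)) c := by
  induction L generalizing c with
  | nil => simp at hs
  | cons t L ih =>
    rw [List.foldl_cons]
    rcases List.mem_cons.mp hs with rfl | hs
    · exact ((le_max_right c (r s)).trans (le_add_of_nonneg_left (hq s))).trans
        (le_foldl_completion r hq L _)
    · exact ih hs _

theorem add_sum_released_le_max_foldl {w : α → ℝ} (hwq : ∀ s, w s ≤ q s) (hq : ∀ s, 0 ≤ q s)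
    (a : ℝ) (L : List α) (c : ℝ) :
    a + (L.map fun s => if a ≤ r s then w s else 0).sum ≤
      max a (L.foldl (fun c s => q s + max c (r s)) c) := by
  induction L generalizing c with
  | nil => simp
  | cons s L ih =>
    rw [List.map_cons, List.sum_cons, List.foldl_cons]
    split_ifs with hs
    · have hrest : (L.map fun s => if a ≤ r s then w s else 0).sum ≤ (L.map q).sum :=
        List.sum_le_sum fun t _ => by split_ifs; exacts [hwq t, hq t]
      have := add_sum_le_foldl_completion q r L (q s + max c (r s))
      have := le_max_right c (r s)
      have := le_max_right a (L.foldl (fun c s => q s + max c (r s)) (q s + max c (r s)))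
      have := hwq s
      linarith
    · simpa using ih _

end Foldl

variable {m n : ℕ}

theorem Schedule.exists_mem_seq (x : Schedule m n) (j : Fin n) : ∃ i, j ∈ x.seq i := by
  by_contra! h
  have := x.valid j
  simp [List.count_eq_zero_of_not_mem (h _)] at this

theorem Schedule.sum_sum_map_seq {M : Type*} [AddCommMonoid M] (x : Schedule m n)
    (g : Fin n → M) : ∑ i, ((x.seq i).map g).sum = ∑ t, g t := by
  have hcount : ∀ L : List (Fin n), (L.map g).sum = ∑ t, L.count t • g t := fun L => by
    rw [Finset.sum_list_map_count]
    exact Finset.sum_subset (subset_univ _) fun t _ ht => by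
      simp [List.count_eq_zero_of_not_mem (by simpa using ht)]
  simp_rw [hcount, Finset.sum_comm (γ := Fin m), ← Finset.sum_smul, x.valid, one_smul]

theorem mComp_nonneg {q : Fin n → ℝ} (hq : ∀ s, 0 ≤ q s) (r : Fin n → ℝ) (L : List (Fin n)) :
    0 ≤ mComp q r L :=
  le_foldl_completion r hq L 0

theorem Cmax_nonneg {p : Fin m → Fin n → ℝ} (hp : ∀ i t, 0 ≤ p i t) (x : Schedule m n)
    (r : Fin n → ℝ) : 0 ≤ Cmax p x r :=
  Real.iSup_nonneg fun i => mComp_nonneg (hp i) r _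

theorem W2_le_Cmax {p : Fin m → Fin n → ℝ} (hp : ∀ i t, 0 ≤ p i t) (x : Schedule m n)
    (r : Fin n → ℝ) (j : Fin n) : W2 p r j ≤ Cmax p x r := by
  set q : Fin n → ℝ := fun t => ⨅ i, p i t
  set S : Fin m → ℝ := fun i => ((x.seq i).map fun s => if r j ≤ r s then q s else 0).sum
  obtain ⟨i₀, hj⟩ := x.exists_mem_seq j
  have hm : (0 : ℝ) < m := Nat.cast_pos.2 i₀.pos
  have hCmax : ∀ i, mComp (p i) r (x.seq i) ≤ Cmax p x r :=
    le_ciSup (Set.finite_range _).bddAbove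
  have hrj : r j ≤ Cmax p x r := (le_foldl_completion_of_mem r (hp i₀) hj 0).trans (hCmax i₀)
  have hmachine : ∀ i, r j + S i ≤ Cmax p x r := fun i =>
    (add_sum_released_le_max_foldl r (fun s => ciInf_le (Set.finite_range _).bddBelow i) (hp i)
      (r j) _ 0).trans (max_le hrj (hCmax i))
  have hshares : ∑ i, S i = ∑ t ∈ Ej r j, q t := by
    rw [Schedule.sum_sum_map_seq, Ej, Finset.sum_filter]
  have htotal : m * r j + ∑ t ∈ Ej r j, q t ≤ m * Cmax p x r := by
    have := Finset.sum_le_sum fun i (_ : i ∈ univ) => hmachine i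
    simpa [Finset.sum_add_distrib, hshares] using this
  calc W2 p r j ≤ r j + (m : ℝ)⁻¹ * ∑ t ∈ Ej r j, q t := by
        unfold W2; gcongr; exact Finset.inf'_le r (by simp [Ej])
    _ ≤ Cmax p x r := by
        rw [← mul_le_mul_iff_of_pos_left hm, mul_add, mul_inv_cancel_left₀ hm.ne']
        exact htotal

theorem lower_bound_LB2_general {m n : ℕ}
    (p : Fin m → Fin n → ℝ) (hp : ∀ i j, 0 < p i j)
    (x : Schedule m n) (r : Fin n → ℝ) :
    (∀ j : Fin n, W2 p r j ≤ Cmax p x r) ∧ LB2 p r ≤ Cstar p r := by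
  have hp₀ : ∀ i j, 0 ≤ p i j := fun i j => (hp i j).le
  have : Nonempty (Schedule m n) := ⟨x⟩
  exact ⟨fun j => W2_le_Cmax hp₀ x r j,
    Real.iSup_le (fun j => le_ciInf fun y => W2_le_Cmax hp₀ y r j)
      (Real.iInf_nonneg fun y => Cmax_nonneg hp₀ y r)⟩

/-- Lower bound LB₂: for every job `j`,
`min_{t ∈ E_j(r)} r t + m⁻¹ ∑_{t ∈ E_j(r)} min_i p i t` is a lower bound on
the makespan; hence `C*(r) ≥ LB₂(r)`. -/
theorem lower_bound_LB2 {m n : ℕ} (hm : 0 < m) (hn : 1 ≤ n)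
    (p : Fin m → Fin n → ℝ) (hp : ∀ i j, 0 < p i j)
    (x : Schedule m n) (r : Fin n → ℝ) (hr : ∀ j, 0 ≤ r j) :
    (∀ j : Fin n, W2 p r j ≤ Cmax p x r) ∧ LB2 p r ≤ Cstar p r :=
  lower_bound_LB2_general p hp x r
end
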